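/- arXiv:1305.5690 — 2 statements merged into one kernel-verified Lean document; each statement's English description precedes it below -/
import Mathlib

section
/- Let ℓ be a prime, let M be a module over the polynomial ring (ℤ/ℓ)[τ] with no τ-torsion (i.e. τ·x = 0 implies x = 0), and let A ⊆ M be a (ℤ/ℓ)[τ]-submodule. Suppose: (i) the induced map A/τA → M/τM is injective, and (ii) for every x ∈ M there exists n ≥ 0 with τⁿ·x ∈ A. Then A = M. -/
/-! If `τⁿ x ∈ A` with `n > 0`, then `τ (τⁿ⁻¹ x) ∈ A ∩ τM ⊆ τA`, say `= τ b` with `b ∈ A`; cancelling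
`τ` gives `τⁿ⁻¹ x = b ∈ A`. Descending on `n` puts every `x` in `A`. -/

namespace Submodule

variable {R M : Type*} [Semiring R] [AddCommMonoid M] [Module R M] {t : R} {A : Submodule R M}

theorem mem_of_smul_mem_of_isSMulRegular (ht : IsSMulRegular M t)
    (hA : ∀ a ∈ A, (∃ m : M, t • m = a) → ∃ b ∈ A, t • b = a) {x : M} (hx : t • x ∈ A) :
    x ∈ A := by
  obtain ⟨b, hbA, hb⟩ := hA _ hx ⟨x, rfl⟩
  rwa [ht hb] at hbA

theorem mem_of_pow_smul_mem_of_isSMulRegular (ht : IsSMulRegular M t)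
    (hA : ∀ a ∈ A, (∃ m : M, t • m = a) → ∃ b ∈ A, t • b = a) {n : ℕ} {x : M}
    (hx : t ^ n • x ∈ A) : x ∈ A := by
  induction n with
  | zero => rwa [pow_zero, one_smul] at hx
  | succ n ih =>
    rw [pow_succ', mul_smul] at hx
    exact ih (mem_of_smul_mem_of_isSMulRegular ht hA hx)

end Submodule

theorem submodule_eq_top_of_tau_conditions_general
    (ℓ : ℕ)
    (M : Type*) [AddCommGroup M] [Module (Polynomial (ZMod ℓ)) M]
    (htf : ∀ x : M, (Polynomial.X : Polynomial (ZMod ℓ)) • x = 0 → x = 0)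
    (A : Submodule (Polynomial (ZMod ℓ)) M)
    (hinj : ∀ a ∈ A, (∃ m : M, (Polynomial.X : Polynomial (ZMod ℓ)) • m = a) →
      ∃ b ∈ A, (Polynomial.X : Polynomial (ZMod ℓ)) • b = a)
    (hloc : ∀ x : M, ∃ n : ℕ, ((Polynomial.X : Polynomial (ZMod ℓ)) ^ n) • x ∈ A) :
    A = ⊤ := by
  have hX : IsSMulRegular M (Polynomial.X : Polynomial (ZMod ℓ)) :=
    IsSMulRegular.of_right_eq_zero_of_smul htf
  refine eq_top_iff.mpr fun x _ => ?_
  obtain ⟨n, hn⟩ := hloc x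
  exact A.mem_of_pow_smul_mem_of_isSMulRegular hX hinj hn

/-- Let `ℓ` be a prime, `M` a module over `(ℤ/ℓ)[τ]` with no `τ`-torsion,
and `A ⊆ M` a submodule such that `A/τA → M/τM` is injective (equivalently
`A ∩ τM ⊆ τA`) and every `x ∈ M` satisfies `τ^n • x ∈ A` for some `n`. Then `A = M`. -/
theorem submodule_eq_top_of_tau_conditions
    (ℓ : ℕ) [Fact ℓ.Prime]
    (M : Type*) [AddCommGroup M] [Module (Polynomial (ZMod ℓ)) M]
    (htf : ∀ x : M, (Polynomial.X : Polynomial (ZMod ℓ)) • x = 0 → x = 0)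
    (A : Submodule (Polynomial (ZMod ℓ)) M)
    (hinj : ∀ a ∈ A, (∃ m : M, (Polynomial.X : Polynomial (ZMod ℓ)) • m = a) →
      ∃ b ∈ A, (Polynomial.X : Polynomial (ZMod ℓ)) • b = a)
    (hloc : ∀ x : M, ∃ n : ℕ, ((Polynomial.X : Polynomial (ZMod ℓ)) ^ n) • x ∈ A) :
    A = ⊤ :=
  submodule_eq_top_of_tau_conditions_general ℓ M htf A hinj hloc
end

section
/- Let p be a prime and let Γ = 𝔽_p[ξ₁, ξ₂, ξ₃, …] be the polynomial algebra over the field with p elements on countably many generators. Define the algebra homomorphism Δ : Γ → Γ ⊗ Γ by Δ(ξ_r) = Σ_{i=0}^{r} ξ_{r−i}^{p^i} ⊗ ξ_i, where ξ₀ = 1. Then Δ is coassociative: (Δ ⊗ id)∘Δ = (id ⊗ Δ)∘Δ. -/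
open TensorProduct

/-- The generators `ξ_r` of the dual Steenrod algebra `Γ = 𝔽_p[ξ₁, ξ₂, …]`,
with the convention `ξ₀ = 1` (so `ξ_{r+1}` is the polynomial generator `X r`). -/
noncomputable def dualSteenrodXi (p : ℕ) (r : ℕ) : MvPolynomial ℕ (ZMod p) :=
  if r = 0 then 1 else MvPolynomial.X (r - 1)

/-- The Milnor coproduct `Δ : Γ → Γ ⊗ Γ`, the unique `𝔽_p`-algebra map with
`Δ(ξ_r) = Σ_{i=0}^{r} ξ_{r−i}^{p^i} ⊗ ξ_i`. -/
noncomputable def dualSteenrodCoproduct (p : ℕ) :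
    MvPolynomial ℕ (ZMod p) →ₐ[ZMod p]
      MvPolynomial ℕ (ZMod p) ⊗[ZMod p] MvPolynomial ℕ (ZMod p) :=
  MvPolynomial.aeval fun n =>
    ∑ i ∈ Finset.range (n + 2),
      ((dualSteenrodXi p (n + 1 - i)) ^ (p ^ i)) ⊗ₜ[ZMod p] dualSteenrodXi p i

/-! Both composites send `ξ_r` to `Σ_{a+b+c=r} ξ_a^{p^{b+c}} ⊗ ξ_b^{p^c} ⊗ ξ_c`. On the left this
needs `Δ(ξ_s)^{p^i} = Σ_j ξ_{s-j}^{p^{i+j}} ⊗ ξ_j^{p^i}`, i.e. that Frobenius is additive on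
`Γ ⊗ Γ`, which has characteristic `p`. The two triangular index sets then match via
`(b, c) ↦ (b + c, c)`. -/

open Finset MvPolynomial

section

variable (p : ℕ)

local notation "Γ" => MvPolynomial ℕ (ZMod p)

lemma dualSteenrodXi_succ (n : ℕ) : dualSteenrodXi p (n + 1) = X n := by
  simp [dualSteenrodXi]

lemma dualSteenrodCoproduct_xi (r : ℕ) :
    dualSteenrodCoproduct p (dualSteenrodXi p r) =
      ∑ i ∈ range (r + 1), (dualSteenrodXi p (r - i) ^ p ^ i) ⊗ₜ[ZMod p] dualSteenrodXi p i := by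
  cases r with
  | zero => simp [dualSteenrodXi, Algebra.TensorProduct.one_def]
  | succ n => simp [dualSteenrodXi, dualSteenrodCoproduct]

lemma map_id_dualSteenrodCoproduct_xi (r : ℕ) :
    Algebra.TensorProduct.map (AlgHom.id (ZMod p) Γ) (dualSteenrodCoproduct p)
        (dualSteenrodCoproduct p (dualSteenrodXi p r)) =
      ∑ k ∈ range (r + 1), ∑ l ∈ range (k + 1),
        (dualSteenrodXi p (r - k) ^ p ^ k) ⊗ₜ[ZMod p]
          ((dualSteenrodXi p (k - l) ^ p ^ l) ⊗ₜ[ZMod p] dualSteenrodXi p l) := by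
  simp only [dualSteenrodCoproduct_xi, map_sum, Algebra.TensorProduct.map_tmul, AlgHom.id_apply,
    tmul_sum]

variable [Fact p.Prime]

instance : ExpChar (Γ ⊗[ZMod p] Γ) p :=
  haveI := charP_of_injective_algebraMap' (ZMod p) (A := Γ ⊗[ZMod p] Γ) p
  ExpChar.prime Fact.out

lemma dualSteenrodCoproduct_xi_pow (r i : ℕ) :
    dualSteenrodCoproduct p (dualSteenrodXi p r) ^ p ^ i =
      ∑ j ∈ range (r + 1),
        (dualSteenrodXi p (r - j) ^ p ^ (j + i)) ⊗ₜ[ZMod p] (dualSteenrodXi p j ^ p ^ i) := by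
  simp only [dualSteenrodCoproduct_xi, sum_pow_char_pow, Algebra.TensorProduct.tmul_pow, ← pow_mul,
    ← pow_add]

lemma assoc_map_dualSteenrodCoproduct_id_xi (r : ℕ) :
    Algebra.TensorProduct.assoc (ZMod p) (ZMod p) (ZMod p) Γ Γ Γ
        (Algebra.TensorProduct.map (dualSteenrodCoproduct p) (AlgHom.id (ZMod p) Γ)
          (dualSteenrodCoproduct p (dualSteenrodXi p r))) =
      ∑ i ∈ range (r + 1), ∑ j ∈ range (r + 1 - i),
        (dualSteenrodXi p (r - i - j) ^ p ^ (j + i)) ⊗ₜ[ZMod p]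
          ((dualSteenrodXi p j ^ p ^ i) ⊗ₜ[ZMod p] dualSteenrodXi p i) := by
  rw [dualSteenrodCoproduct_xi p r]
  simp only [map_sum, Algebra.TensorProduct.map_tmul, map_pow, AlgHom.id_apply,
    dualSteenrodCoproduct_xi_pow, sum_tmul, Algebra.TensorProduct.assoc_tmul]
  refine sum_congr rfl fun i hi => sum_congr ?_ fun j _ => by rw [Nat.sub_right_comm]
  rw [Nat.sub_add_comm (Nat.le_of_lt_succ (mem_range.mp hi))]

end

/-- The Milnor coproduct on the dual Steenrod algebra is coassociative. -/
theorem dualSteenrodCoproduct_coassoc (p : ℕ) [Fact p.Prime] :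
    (Algebra.TensorProduct.assoc (ZMod p) (ZMod p) (ZMod p) (MvPolynomial ℕ (ZMod p))
        (MvPolynomial ℕ (ZMod p)) (MvPolynomial ℕ (ZMod p))).toAlgHom.comp
      ((Algebra.TensorProduct.map (dualSteenrodCoproduct p)
          (AlgHom.id (ZMod p) (MvPolynomial ℕ (ZMod p)))).comp (dualSteenrodCoproduct p)) =
    (Algebra.TensorProduct.map (AlgHom.id (ZMod p) (MvPolynomial ℕ (ZMod p)))
        (dualSteenrodCoproduct p)).comp (dualSteenrodCoproduct p) := by
  refine algHom_ext fun n => ?_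
  simp only [AlgHom.comp_apply, AlgEquiv.coe_toAlgHom, ← dualSteenrodXi_succ,
    assoc_map_dualSteenrodCoproduct_id_xi, map_id_dualSteenrodCoproduct_xi]
  rw [← sum_range_diag_flip]
  refine sum_congr rfl fun k _ => sum_congr rfl fun l hl => ?_
  have hlk : l ≤ k := Nat.le_of_lt_succ (mem_range.mp hl)
  rw [Nat.sub_add_cancel hlk, Nat.sub_sub, Nat.add_sub_cancel' hlk]
end
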